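/- arXiv:2010.14192 — 8 statements merged into one kernel-verified Lean document; each statement's English description precedes it below -/
import Mathlib

section
/- Let A be a left Noetherian K-algebra. If the injective hull of every finite dimensional irreducible left A-module is locally finite, then the injective hull of every locally finite left A-module is locally finite. -/
universe v

/-- A module is locally finite if every cyclic `A`-submodule is
finite dimensional over the base field `K`. -/
def LocFin (K A M : Type*) [Field K] [Ring A] [Algebra K A]
    [AddCommGroup M] [Module A M] [Module K M] [IsScalarTower K A M] : Prop :=
  ∀ m : M, FiniteDimensional K ((Submodule.span A {m}).restrictScalars K)

/-- A submodule is essential if it meets every nonzero submodule nontrivially. -/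
def EssSub {A M : Type*} [Ring A] [AddCommGroup M] [Module A M]
    (N : Submodule A M) : Prop :=
  ∀ P : Submodule A M, P ⊓ N = ⊥ → P = ⊥

/-! Fix `m : M`. As `A` is left Noetherian, `Am ⊓ N` is finitely generated, hence finite
dimensional, and it is essential in `Am`; so it suffices to show that a module with a finite
dimensional essential submodule `N` is locally finite. Induct on `dim N`: pick a simple `S ≤ N`
and `P` maximal with `P ⊓ S = 0`. Then `S` embeds in `M ⧸ P` as an essential simple submodule,
so `M ⧸ P` is locally finite by hypothesis, while `P ⊓ N` is essential in `P` and of smaller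
dimension, so `P` is locally finite by induction. Over a left Noetherian algebra local
finiteness passes to extensions, since `Am ⊓ P` is again finitely generated. -/

open Submodule Module

section Ring

variable {A M M' : Type*} [Ring A] [AddCommGroup M] [Module A M] [AddCommGroup M'] [Module A M']

noncomputable def Submodule.equivMapOfDisjointKer (p : Submodule A M) (f : M →ₗ[A] M')
    (h : Disjoint p (LinearMap.ker f)) : p ≃ₗ[A] p.map f :=
  (LinearEquiv.ofInjective (f.domRestrict p) (by
      rwa [← LinearMap.ker_eq_bot, LinearMap.ker_domRestrict, ← disjoint_iff_comap_eq_bot])).trans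
    (LinearEquiv.ofEq _ _ (LinearMap.range_domRestrict p f))

noncomputable def Submodule.comapSubtypeEquivInf (P N : Submodule A M) :
    N.comap P.subtype ≃ₗ[A] ↥(P ⊓ N) :=
  (N.comap P.subtype).equivMapOfInjective P.subtype P.injective_subtype
    |>.trans (LinearEquiv.ofEq _ _ (map_comap_subtype P N))

theorem EssSub.comap_subtype {N : Submodule A M} (hN : EssSub N) (P : Submodule A M) :
    EssSub (N.comap P.subtype) := by
  intro Q hQ
  have hmap : Q.map P.subtype ⊓ N = ⊥ := by
    have := congrArg (map P.subtype) hQ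
    rwa [map_inf _ P.injective_subtype, map_comap_subtype, Submodule.map_bot, ← inf_assoc,
      inf_eq_left.mpr (map_subtype_le P Q)] at this
  exact map_injective_of_injective P.injective_subtype (by rw [hN _ hmap, Submodule.map_bot])

theorem exists_maximal_disjoint (S : Submodule A M) : ∃ P, Maximal (Disjoint · S) P :=
  zorn_le₀ _ fun c hc hchain =>
    ⟨sSup c, hchain.directedOn.disjoint_sSup_left.mpr hc, fun _ => le_sSup⟩

theorem EssSub.map_mkQ_of_maximal_disjoint {S P : Submodule A M}
    (hP : Maximal (Disjoint · S) P) : EssSub (S.map P.mkQ) := by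
  intro Q hQ
  have hdisj : Disjoint (Q.comap P.mkQ) S := by
    rw [disjoint_iff, eq_bot_iff]
    rintro x ⟨hxQ, hxS⟩
    have hx : P.mkQ x ∈ Q ⊓ S.map P.mkQ := ⟨hxQ, mem_map_of_mem hxS⟩
    rw [hQ, mem_bot, mkQ_apply, Quotient.mk_eq_zero] at hx
    exact hP.1.le_bot ⟨hx, hxS⟩
  have hcomap : Q.comap P.mkQ = P := hP.eq_of_le hdisj (le_comap_mkQ P Q) |>.symm
  rw [← map_comap_eq_of_surjective P.mkQ_surjective Q, hcomap, mkQ_map_self]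

end Ring

section Algebra

variable {K A M M' : Type*} [Field K] [Ring A] [Algebra K A]
  [AddCommGroup M] [Module A M] [Module K M] [IsScalarTower K A M]
  [AddCommGroup M'] [Module A M'] [Module K M'] [IsScalarTower K A M']

theorem LinearEquiv.finiteDimensional_restrictScalars {p : Submodule A M} {q : Submodule A M'}
    (e : p ≃ₗ[A] q) (hp : FiniteDimensional K (p.restrictScalars K)) :
    FiniteDimensional K (q.restrictScalars K) :=
  have : FiniteDimensional K p := hp
  (e.restrictScalars K).finiteDimensional

theorem LinearEquiv.finrank_restrictScalars_eq {p : Submodule A M} {q : Submodule A M'}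
    (e : p ≃ₗ[A] q) : finrank K (p.restrictScalars K) = finrank K (q.restrictScalars K) :=
  (e.restrictScalars K).finrank_eq

theorem finiteDimensional_restrictScalars_span {s : Set M} (hs : s.Finite)
    (h : ∀ m ∈ s, FiniteDimensional K ((span A {m}).restrictScalars K)) :
    FiniteDimensional K ((span A s).restrictScalars K) := by
  induction s, hs using Set.Finite.induction_on with
  | empty => rw [Submodule.span_empty, Submodule.restrictScalars_bot]; infer_instance
  | @insert m s _ _ ih =>
    rw [span_insert, restrictScalars_sup]
    have := h m (Set.mem_insert m s)
    have := ih fun x hx => h x (Set.mem_insert_of_mem m hx)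
    infer_instance

theorem LocFin.finiteDimensional_of_le {N : Submodule A M} (hN : LocFin K A N)
    {p : Submodule A M} (hpN : p ≤ N) (hp : p.FG) : FiniteDimensional K (p.restrictScalars K) := by
  obtain ⟨s, rfl⟩ := hp
  refine finiteDimensional_restrictScalars_span s.finite_toSet fun m hm => ?_
  have hmN : m ∈ N := hpN (subset_span hm)
  have hspan : (span A {(⟨m, hmN⟩ : N)}).map N.subtype = span A {m} := by
    rw [map_span, Set.image_singleton, subtype_apply]
  exact ((span A {(⟨m, hmN⟩ : N)}).equivMapOfInjective N.subtype N.injective_subtype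
    |>.trans (LinearEquiv.ofEq _ _ hspan)).finiteDimensional_restrictScalars (hN ⟨m, hmN⟩)

theorem LocFin.of_quotient [IsNoetherianRing A] {P : Submodule A M} (hP : LocFin K A P)
    (hQ : LocFin K A (M ⧸ P)) : LocFin K A M := by
  intro m
  have hmap : ((span A {m}).restrictScalars K).map (P.mkQ.restrictScalars K) =
      (span A {P.mkQ m}).restrictScalars K := by
    rw [← restrictScalars_map, map_span, Set.image_singleton]
  have hker : (span A {m}).restrictScalars K ⊓ LinearMap.ker (P.mkQ.restrictScalars K) =
      (span A {m} ⊓ P).restrictScalars K := by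
    rw [LinearMap.ker_restrictScalars, ker_mkQ, restrictScalars_inf]
  have hfdP := hP.finiteDimensional_of_le inf_le_right ((fg_span_singleton m).of_le inf_le_left)
  rw [← fg_iff_finiteDimensional] at hfdP ⊢
  refine fg_of_fg_map_of_fg_inf_ker (P.mkQ.restrictScalars K) ?_ (by rwa [hker])
  rw [hmap, fg_iff_finiteDimensional]
  exact hQ (P.mkQ m)

theorem exists_isSimpleModule_le {N : Submodule A M} (hN : N ≠ ⊥)
    (hfd : FiniteDimensional K (N.restrictScalars K)) : ∃ S ≤ N, IsSimpleModule A S := by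
  have : IsArtinian A N :=
    isArtinian_of_tower K (inferInstanceAs (IsArtinian K (N.restrictScalars K)))
  have : Nontrivial N := nontrivial_iff_ne_bot.mpr hN
  obtain ⟨T, hT⟩ := IsAtomic.exists_atom (Submodule A N)
  have := isSimpleModule_iff_isAtom.mpr hT
  exact ⟨T.map N.subtype, map_subtype_le N T,
    .congr (T.equivMapOfInjective N.subtype N.injective_subtype).symm⟩

end Algebra

section Noetherian

variable {K A : Type*} [Field K] [Ring A] [Algebra K A] [IsNoetherianRing A]

theorem locFin_of_essSub_finiteDimensional
    (hsimple : ∀ (M : Type v) [AddCommGroup M] [Module A M] [Module K M] [IsScalarTower K A M]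
      (N : Submodule A M), EssSub N → IsSimpleModule A N →
      FiniteDimensional K (N.restrictScalars K) → LocFin K A M)
    (M : Type v) [AddCommGroup M] [Module A M] [Module K M] [IsScalarTower K A M]
    (N : Submodule A M) (hN : EssSub N) (hfd : FiniteDimensional K (N.restrictScalars K)) :
    LocFin K A M := by
  induction hn : finrank K (N.restrictScalars K) using Nat.strong_induction_on generalizing M
    with | _ n ih =>
  rcases eq_or_ne N ⊥ with rfl | hN0
  · intro m
    rw [hN (span A {m}) (inf_bot_eq _), restrictScalars_bot]
    infer_instance
  obtain ⟨S, hSN, hS⟩ := exists_isSimpleModule_le hN0 hfd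
  obtain ⟨P, hP⟩ := exists_maximal_disjoint S
  have e := S.equivMapOfDisjointKer P.mkQ (by rw [ker_mkQ]; exact hP.1.symm)
  have hquot : LocFin K A (M ⧸ P) :=
    hsimple _ (S.map P.mkQ) (.map_mkQ_of_maximal_disjoint hP) (.congr e.symm)
      (e.finiteDimensional_restrictScalars (finiteDimensional_of_le (restrictScalars_mono K hSN)))
  have hPN : P ⊓ N < N := by
    refine inf_le_right.lt_of_ne fun h => (isSimpleModule_iff_isAtom.mp hS).1 ?_
    exact hP.1.symm.eq_bot_of_le (hSN.trans (h ▸ inf_le_left))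
  have hlt : finrank K ((N.comap P.subtype).restrictScalars K) < n := by
    rw [← hn, (P.comapSubtypeEquivInf N).finrank_restrictScalars_eq]
    exact finrank_lt_finrank_of_lt ((restrictScalars_lt K).mpr hPN)
  have hfdP := (P.comapSubtypeEquivInf N).symm.finiteDimensional_restrictScalars
    (finiteDimensional_of_le (restrictScalars_mono K hPN.le))
  exact (ih _ hlt P (N.comap P.subtype) (hN.comap_subtype P) hfdP rfl).of_quotient hquot

end Noetherian

theorem stmt2 (K A : Type*) [Field K] [Ring A] [Algebra K A] [IsNoetherianRing A]
    (hsimple : ∀ (M : Type v) [AddCommGroup M] [Module A M] [Module K M] [IsScalarTower K A M]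
      (N : Submodule A M), EssSub N → IsSimpleModule A N →
      FiniteDimensional K (N.restrictScalars K) → LocFin K A M) :
    ∀ (M : Type v) [AddCommGroup M] [Module A M] [Module K M] [IsScalarTower K A M]
      (N : Submodule A M), EssSub N → LocFin K A N → LocFin K A M := by
  intro M _ _ _ _ N hN hlf m
  set C := span A {m}
  have hCfg : C.FG := fg_span_singleton m
  have hfd := (C.comapSubtypeEquivInf N).symm.finiteDimensional_restrictScalars
    (hlf.finiteDimensional_of_le inf_le_right (hCfg.of_le inf_le_left))
  have hC : LocFin K A C :=
    locFin_of_essSub_finiteDimensional hsimple C (N.comap C.subtype) (hN.comap_subtype C) hfd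
  exact hC.finiteDimensional_of_le le_rfl hCfg
end

section
/- Let A be a left Noetherian K-algebra and suppose every essential extension of a locally finite left A-module is locally finite. Then for every injective left A-module E, the sum Loc(E) of all finite dimensional submodules of E is a direct summand of E (indeed Loc(E) is injective). -/
/-!
Take `C` maximal with `C ⊓ Loc E = ⊥` (Zorn). Then `Loc E` embeds into `E ⧸ C` as an essential
submodule, so `E ⧸ C` is locally finite by hypothesis. Injectivity of `E` extends the inclusion
`Loc E → E` along this embedding to `f : E ⧸ C → E`; the image of `f` is locally finite, hence lies
in `Loc E`, so `E → E ⧸ C → Loc E` is a retraction of `E` onto `Loc E`. A retract of an injective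
module is injective, and its kernel is a complement.
-/

universe v

/-- `Loc E`: the sum of all finite dimensional submodules of `E`, i.e. the
largest locally finite submodule. -/
def Loc (K : Type*) {A M : Type*} [Field K] [Ring A] [Algebra K A]
    [AddCommGroup M] [Module A M] [Module K M] [IsScalarTower K A M] : Submodule A M :=
  sSup {p : Submodule A M | FiniteDimensional K (p.restrictScalars K)}

theorem exists_maximal_disjoint_s3 {α : Type*} [CompleteLattice α] [IsCompactlyGenerated α] (a : α) :
    ∃ b, Maximal (Disjoint · a) b :=
  zorn_le₀ _ fun c hc hchain =>
    ⟨sSup c, hchain.directedOn.disjoint_sSup_left.2 hc, fun _ => le_sSup⟩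

section LocallyFinite

variable {K A : Type*} [Field K] [Ring A] [Algebra K A]
variable {M M' : Type*} [AddCommGroup M] [Module A M] [Module K M] [IsScalarTower K A M]
variable [AddCommGroup M'] [Module A M'] [Module K M'] [IsScalarTower K A M']

theorem finiteDimensional_restrictScalars_map (f : M →ₗ[A] M') {p : Submodule A M}
    (hp : FiniteDimensional K (p.restrictScalars K)) :
    FiniteDimensional K ((p.map f).restrictScalars K) :=
  inferInstanceAs (FiniteDimensional K ((p.restrictScalars K).map (f.restrictScalars K)))

theorem finiteDimensional_restrictScalars_of_map {f : M →ₗ[A] M'} (hf : Function.Injective f)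
    {p : Submodule A M} (hp : FiniteDimensional K ((p.map f).restrictScalars K)) :
    FiniteDimensional K (p.restrictScalars K) := by
  rw [← Submodule.fg_iff_finiteDimensional] at hp ⊢
  exact Submodule.fg_of_fg_map_injective (f.restrictScalars K) hf hp

theorem mem_loc_iff {m : M} :
    m ∈ Loc K (A := A) (M := M) ↔
      FiniteDimensional K ((Submodule.span A {m}).restrictScalars K) := by
  refine ⟨fun hm => ?_, fun hm => le_sSup (α := Submodule A M) hm
    (Submodule.mem_span_singleton_self m)⟩
  have hdir : DirectedOn (· ≤ ·)
      {p : Submodule A M | FiniteDimensional K (p.restrictScalars K)} := by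
    rintro p (hp : FiniteDimensional K _) q (hq : FiniteDimensional K _)
    refine ⟨p ⊔ q, ?_, le_sup_left, le_sup_right⟩
    show FiniteDimensional K ((p ⊔ q).restrictScalars K)
    rw [Submodule.restrictScalars_sup]
    infer_instance
  have hbot : FiniteDimensional K ((⊥ : Submodule A M).restrictScalars K) := by
    rw [Submodule.restrictScalars_bot]; infer_instance
  obtain ⟨p, hp, hmp⟩ := (Submodule.mem_sSup_of_directed ⟨⊥, hbot⟩ hdir).1 hm
  have : FiniteDimensional K (p.restrictScalars K) := hp
  exact Submodule.finiteDimensional_of_le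
    (Submodule.restrictScalars_mono K ((Submodule.span_singleton_le_iff_mem _ _).2 hmp))

theorem range_le_loc_of_locFin (f : M →ₗ[A] M') (hM : LocFin K A M) :
    LinearMap.range f ≤ Loc K := by
  rintro _ ⟨m, rfl⟩
  rw [mem_loc_iff, ← Set.image_singleton, ← Submodule.map_span]
  exact finiteDimensional_restrictScalars_map f (hM m)

theorem locFin_iff_le_loc (N : Submodule A M) : LocFin K A N ↔ N ≤ Loc K := by
  refine ⟨fun hN => N.range_subtype ▸ range_le_loc_of_locFin N.subtype hN, fun hN m => ?_⟩
  refine finiteDimensional_restrictScalars_of_map N.injective_subtype ?_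
  rw [Submodule.map_span, Set.image_singleton]
  exact mem_loc_iff.1 (hN m.2)

end LocallyFinite

namespace Submodule

variable {A M : Type*} [Ring A] [AddCommGroup M] [Module A M]

theorem injective_mkQ_comp_subtype {L C : Submodule A M} (h : Disjoint C L) :
    Function.Injective (C.mkQ ∘ₗ L.subtype) := by
  rw [← LinearMap.ker_eq_bot, LinearMap.ker_comp, Submodule.ker_mkQ,
    ← Submodule.disjoint_iff_comap_eq_bot]
  exact h.symm

theorem essSub_range_mkQ_comp_subtype {L C : Submodule A M}
    (hC : Maximal (Disjoint · L) C) :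
    EssSub (LinearMap.range (C.mkQ ∘ₗ L.subtype)) := by
  intro P hP
  have hCP : C ≤ P.comap C.mkQ := fun x hx => by
    simp [(Submodule.Quotient.mk_eq_zero C).2 hx]
  have hdisj : Disjoint (P.comap C.mkQ) L := by
    rw [disjoint_iff, eq_bot_iff]
    rintro x ⟨hxP, hxL⟩
    have hx : C.mkQ x ∈ P ⊓ LinearMap.range (C.mkQ ∘ₗ L.subtype) := ⟨hxP, ⟨⟨x, hxL⟩, rfl⟩⟩
    rw [hP, Submodule.mem_bot, Submodule.mkQ_apply, Submodule.Quotient.mk_eq_zero] at hx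
    exact hC.1.le_bot ⟨hx, hxL⟩
  rw [← Submodule.map_comap_eq_of_surjective C.mkQ_surjective P, ← hC.eq_of_le hdisj hCP,
    Submodule.mkQ_map_self]

end Submodule

theorem Module.Injective.of_leftInverse {R : Type*} [Ring R] {Q P : Type v} [AddCommGroup Q]
    [Module R Q] [AddCommGroup P] [Module R P] (hQ : Module.Injective R Q) (i : P →ₗ[R] Q)
    (r : Q →ₗ[R] P) (h : Function.LeftInverse r i) : Module.Injective R P where
  out _ _ _ _ _ _ f hf g := by
    obtain ⟨g', hg'⟩ := hQ.out f hf (i ∘ₗ g)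
    exact ⟨r ∘ₗ g', fun x => by rw [LinearMap.comp_apply, hg', LinearMap.comp_apply, h]⟩

theorem exists_retraction_onto_loc {K A : Type*} [Field K] [Ring A] [Algebra K A]
    (hec : ∀ (M : Type v) [AddCommGroup M] [Module A M] [Module K M] [IsScalarTower K A M]
      (N : Submodule A M), EssSub N → LocFin K A N → LocFin K A M)
    {E : Type v} [AddCommGroup E] [Module A E] [Module K E] [IsScalarTower K A E]
    (hE : Module.Injective A E) :
    ∃ π : E →ₗ[A] Loc K (A := A) (M := E), ∀ x : Loc K (A := A) (M := E), π x = x := by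
  set L := Loc K (A := A) (M := E)
  obtain ⟨C, hC⟩ := exists_maximal_disjoint_s3 L
  set ι := C.mkQ ∘ₗ L.subtype
  have hL : LocFin K A L := (locFin_iff_le_loc L).2 le_rfl
  have hιL : LocFin K A (LinearMap.range ι) :=
    (locFin_iff_le_loc _).2 (range_le_loc_of_locFin ι hL)
  have hQ : LocFin K A (E ⧸ C) := hec _ _ (Submodule.essSub_range_mkQ_comp_subtype hC) hιL
  obtain ⟨f, hf⟩ := hE.out ι (Submodule.injective_mkQ_comp_subtype hC.1) L.subtype
  exact ⟨(f ∘ₗ C.mkQ).codRestrict L fun _ => range_le_loc_of_locFin f hQ ⟨_, rfl⟩,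
    fun x => Subtype.ext (hf x)⟩

theorem stmt3_general (K A : Type*) [Field K] [Ring A] [Algebra K A]
    (hec : ∀ (M : Type v) [AddCommGroup M] [Module A M] [Module K M] [IsScalarTower K A M]
      (N : Submodule A M), EssSub N → LocFin K A N → LocFin K A M)
    (E : Type v) [AddCommGroup E] [Module A E] [Module K E] [IsScalarTower K A E]
    (hE : Module.Injective A E) :
    (∃ q : Submodule A E, IsCompl (Loc K (A := A) (M := E)) q) ∧
      Module.Injective A (Loc K (A := A) (M := E)) := by
  obtain ⟨π, hπ⟩ := exists_retraction_onto_loc hec hE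
  exact ⟨⟨_, LinearMap.isCompl_of_proj hπ⟩, hE.of_leftInverse (Submodule.subtype _) π hπ⟩

theorem stmt3 (K A : Type*) [Field K] [Ring A] [Algebra K A] [IsNoetherianRing A]
    (hec : ∀ (M : Type v) [AddCommGroup M] [Module A M] [Module K M] [IsScalarTower K A M]
      (N : Submodule A M), EssSub N → LocFin K A N → LocFin K A M)
    (E : Type v) [AddCommGroup E] [Module A E] [Module K E] [IsScalarTower K A E]
    (hE : Module.Injective A E) :
    (∃ q : Submodule A E, IsCompl (Loc K (A := A) (M := E)) q) ∧
      Module.Injective A (Loc K (A := A) (M := E)) :=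
  stmt3_general K A hec E hE
end

section
/- Let A be a Noetherian K-algebra, V a finite dimensional irreducible left A-module annihilated by a normal element x of A (i.e., xA = Ax and xV = 0), and let E be a finitely generated essential extension of V such that x^n E = 0 for some n ≥ 1. Define f: E → E by f(m) = x m. Then there is a finite filtration 0 ⊆ ker f ⊆ ker f² ⊆ ... ⊆ ker fⁿ = E by A-submodules, and E is finite dimensional over K if and only if ker f = Ann_E(x) is finite dimensional over K. -/
/-!
Since `x A ⊆ A x`, the same holds for every power `x ^ k`, so each `ker (f ^ k)` is an
`A`-submodule. As a `K`-linear map, `f` sends `ker (f ^ (k + 1))` into `ker (f ^ k)` and the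
kernel of this restriction lies in `ker f`; hence
`dim ker (f ^ (k + 1)) ≤ dim ker (f ^ k) + dim ker f`, and since `f ^ n = 0`, `E` is finite
dimensional as soon as `ker f` is.
-/

open LinearMap

theorem exists_pow_mul_eq_mul_pow {A : Type*} [Monoid A] {x : A}
    (hx : ∀ a : A, ∃ b : A, x * a = b * x) (k : ℕ) (a : A) : ∃ b : A, x ^ k * a = b * x ^ k := by
  induction k generalizing a with
  | zero => exact ⟨a, by simp⟩
  | succ k ih =>
    obtain ⟨b, hb⟩ := hx a
    obtain ⟨c, hc⟩ := ih b
    exact ⟨c, by rw [pow_succ, mul_assoc, hb, ← mul_assoc, hc, mul_assoc, ← pow_succ]⟩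

def Submodule.kerSMul {A M : Type*} [Ring A] [AddCommGroup M] [Module A M] (x : A)
    (hx : ∀ a : A, ∃ b : A, x * a = b * x) : Submodule A M where
  carrier := {m | x • m = 0}
  add_mem' ha hb := by simp_all
  zero_mem' := smul_zero x
  smul_mem' a m hm := by
    obtain ⟨b, hb⟩ := hx a
    change x • a • m = 0
    rw [smul_smul, hb, mul_smul, hm, smul_zero]

theorem Module.End.finiteDimensional_ker_pow {K M : Type*} [DivisionRing K] [AddCommGroup M]
    [Module K M] (f : Module.End K M) [FiniteDimensional K (ker f)] (k : ℕ) :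
    FiniteDimensional K (ker (f ^ k)) := by
  induction k with
  | zero =>
    rw [pow_zero, Module.End.one_eq_id, ker_id]
    infer_instance
  | succ k ih =>
    have hker : ker (f ^ (k + 1)) = (ker (f ^ k)).comap f := by
      rw [pow_succ, Module.End.mul_eq_comp, ker_comp]
    rw [hker]
    refine Module.rank_lt_aleph0_iff.1 ?_
    have hrank := lift_rank_comap_le (f := f) (ker (f ^ k))
    simp only [Cardinal.lift_id] at hrank
    exact hrank.trans_lt (Cardinal.add_lt_aleph0 (Module.rank_lt_aleph0_iff.2 ih)
      (Module.rank_lt_aleph0_iff.2 inferInstance))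

theorem IsNilpotent.finiteDimensional_iff_ker {K M : Type*} [DivisionRing K] [AddCommGroup M]
    [Module K M] {f : Module.End K M} (hf : IsNilpotent f) :
    FiniteDimensional K M ↔ FiniteDimensional K (ker f) := by
  refine ⟨fun _ ↦ inferInstance, fun _ ↦ ?_⟩
  obtain ⟨n, hn⟩ := hf
  have := f.finiteDimensional_ker_pow n
  rw [hn, ker_zero] at this
  exact Submodule.topEquiv.finiteDimensional

theorem stmt6_general (K A : Type*) [Field K] [Ring A] [Algebra K A]
    (E : Type*) [AddCommGroup E] [Module A E] [Module K E] [IsScalarTower K A E]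
    (x : A)
    (hnorm : (∀ a : A, ∃ b : A, x * a = b * x) ∧ ∀ a : A, ∃ b : A, a * x = x * b)
    (n : ℕ) (hxE : ∀ m : E, x ^ n • m = 0) :
    (∃ p : ℕ → Submodule A E,
        (∀ k, (p k : Set E) = {m : E | x ^ k • m = 0}) ∧ Monotone p ∧ p n = ⊤) ∧
    (∀ q : Submodule A E, (q : Set E) = {m : E | x • m = 0} →
      (FiniteDimensional K E ↔ FiniteDimensional K (q.restrictScalars K))) := by
  refine ⟨⟨fun k ↦ Submodule.kerSMul (x ^ k) (exists_pow_mul_eq_mul_pow hnorm.1 k),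
    fun k ↦ rfl, ?_, eq_top_iff.2 fun m _ ↦ hxE m⟩, fun q hq ↦ ?_⟩
  · refine monotone_nat_of_le_succ fun k m (hm : x ^ k • m = 0) ↦ ?_
    change x ^ (k + 1) • m = 0
    rw [pow_succ', mul_smul, hm, smul_zero]
  · let f := DistribMulAction.toModuleEnd K E x
    have hf : IsNilpotent f := ⟨n, by ext m; rw [← map_pow]; exact hxE m⟩
    have hq : q.restrictScalars K = ker f := SetLike.coe_injective hq
    rw [hq]
    exact hf.finiteDimensional_iff_ker

theorem stmt6 (K A : Type*) [Field K] [Ring A] [Algebra K A] [IsNoetherianRing A]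
    (E : Type*) [AddCommGroup E] [Module A E] [Module K E] [IsScalarTower K A E]
    [Module.Finite A E]
    (x : A)
    (hnorm : (∀ a : A, ∃ b : A, x * a = b * x) ∧ ∀ a : A, ∃ b : A, a * x = x * b)
    (V : Submodule A E) (hVess : EssSub V) (hVsimple : IsSimpleModule A V)
    (hVfin : FiniteDimensional K (V.restrictScalars K))
    (hxV : ∀ v ∈ V, x • v = 0)
    (n : ℕ) (hn : 1 ≤ n) (hxE : ∀ m : E, x ^ n • m = 0) :
    (∃ p : ℕ → Submodule A E,
        (∀ k, (p k : Set E) = {m : E | x ^ k • m = 0}) ∧ Monotone p ∧ p n = ⊤) ∧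
    (∀ q : Submodule A E, (q : Set E) = {m : E | x • m = 0} →
      (FiniteDimensional K E ↔ FiniteDimensional K (q.restrictScalars K))) :=
  stmt6_general K A E x hnorm n hxE
end

section
/- Let A be a left Noetherian K-algebra and Q an ideal of A with the left Artin-Rees property. Let V be a finite dimensional left A-module with QV = 0 and let E be a finitely generated essential extension of V. Then Q^n E = 0 for some n ≥ 1. -/
universe v

theorem stmt7_general (A : Type*) [Ring A] (Q : Ideal A)
    (hAR : ∀ (M : Type v) [AddCommGroup M] [Module A M] [Module.Finite A M]
      (N : Submodule A M), ∃ n : ℕ, 1 ≤ n ∧ N ⊓ (Q ^ n • (⊤ : Submodule A M)) ≤ Q • N)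
    (E : Type v) [AddCommGroup E] [Module A E] [Module.Finite A E]
    (V : Submodule A E) (hQV : Q • V = ⊥) (hVess : EssSub V) :
    ∃ n : ℕ, 1 ≤ n ∧ Q ^ n • (⊤ : Submodule A E) = ⊥ := by
  obtain ⟨n, hn, hV⟩ := hAR E V
  refine ⟨n, hn, hVess _ ?_⟩
  rw [inf_comm, ← le_bot_iff, ← hQV]
  exact hV

theorem stmt7 (K A : Type*) [Field K] [Ring A] [Algebra K A] [IsNoetherianRing A]
    (Q : Ideal A) (hQtwoSided : ∀ a ∈ Q, ∀ b : A, a * b ∈ Q)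
    (hAR : ∀ (M : Type v) [AddCommGroup M] [Module A M] [Module.Finite A M]
      (N : Submodule A M), ∃ n : ℕ, 1 ≤ n ∧ N ⊓ (Q ^ n • (⊤ : Submodule A M)) ≤ Q • N)
    (E : Type v) [AddCommGroup E] [Module A E] [Module K E] [IsScalarTower K A E]
    [Module.Finite A E]
    (V : Submodule A E) (hVfin : FiniteDimensional K (V.restrictScalars K))
    (hQV : Q • V = ⊥) (hVess : EssSub V) :
    ∃ n : ℕ, 1 ≤ n ∧ Q ^ n • (⊤ : Submodule A E) = ⊥ :=
  stmt7_general A Q hAR E V hQV hVess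
end

section
/- Let R ⊆ S be a finite normalizing extension of K-algebras, with S = Σᵢ R xᵢ and R xᵢ = xᵢ R for finitely many x₁,...,xₙ ∈ S. If E is a locally finite left R-module, then Hom_R(S, E), with the left S-module structure (s·f)(x) = f(xs), is locally finite as a left R-module. -/
/-!
Evaluation at the generators embeds `Hom_R(S, E)` `K`-linearly into `Eⁿ`. Since `xᵢ R ⊆ R xᵢ`,
for `r ∈ R` we can write `xᵢ r = r' xᵢ`, so `(r • f)(xᵢ) = f (xᵢ r) = r' • f xᵢ ∈ R f(xᵢ)`.
Hence `R • f` lies in the preimage of `∏ᵢ R f(xᵢ)`, which is finite-dimensional as `E` is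
locally finite.
-/

open Submodule

section EvaluationBounded

variable {K R M E ι : Type*} [Field K] [Ring R] [AddCommGroup M] [Module R M]
  [AddCommGroup E] [Module R E] [Module K E] [SMulCommClass R K E]

theorem LinearMap.finiteDimensional_iInf_comap_applyₗ' [Finite ι] {v : ι → M}
    (hv : span R (Set.range v) = ⊤) (V : ι → Submodule K E) [∀ i, FiniteDimensional K (V i)] :
    FiniteDimensional K ↥(⨅ i, (V i).comap (LinearMap.applyₗ' (R := R) K (v i))) := by
  set W := ⨅ i, (V i).comap (LinearMap.applyₗ' (R := R) K (v i))
  have hW : ∀ g ∈ W, ∀ i, g (v i) ∈ V i := fun g hg i => (mem_iInf _).1 hg i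
  let Ψ : W →ₗ[K] ∀ i, V i := LinearMap.pi fun i =>
    ((LinearMap.applyₗ' K (v i)).domRestrict W).codRestrict (V i) fun g => hW g g.2 i
  refine FiniteDimensional.of_injective Ψ fun g h hgh => Subtype.ext ?_
  exact LinearMap.ext_on_range hv fun i => congrArg Subtype.val (congrFun hgh i)

end EvaluationBounded

theorem LinearMap.apply_mul_mem_span_singleton {K S E : Type*} [Field K] [Ring S] [Algebra K S]
    {R : Subalgebra K S} [AddCommGroup E] [Module R E] {x : S}
    (hx : (fun r => x * r) '' (R : Set S) ⊆ (fun r => r * x) '' (R : Set S))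
    (f : S →ₗ[R] E) (r : R) : f (x * r) ∈ span R {f x} := by
  obtain ⟨a, ha, hax⟩ := hx ⟨r, r.2, rfl⟩
  have : f (x * r) = (⟨a, ha⟩ : R) • f x := by
    rw [← map_smul f]
    exact congrArg f hax.symm
  exact this ▸ smul_mem _ _ (mem_span_singleton_self _)

theorem stmt8 (K S : Type*) [Field K] [Ring S] [Algebra K S]
    (R : Subalgebra K S) {n : ℕ} (x : Fin n → S)
    (hgen : Submodule.span R (Set.range x) = (⊤ : Submodule R S))
    (hnormal : ∀ i : Fin n,
      (fun r => r * x i) '' (R : Set S) = (fun r => x i * r) '' (R : Set S))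
    (E : Type*) [AddCommGroup E] [Module R E] [Module K E] [IsScalarTower K R E]
    [SMulCommClass R K E]
    (hE : ∀ e : E, FiniteDimensional K ((Submodule.span R ({e} : Set E)).restrictScalars K)) :
    ∀ f : S →ₗ[R] E, ∃ W : Submodule K (S →ₗ[R] E), FiniteDimensional K W ∧
      ∀ r : R, ∃ g ∈ W, ∀ s : S, g s = f (s * (r : S)) := by
  intro f
  have := fun i => hE (f (x i))
  refine ⟨⨅ i, ((span R {f (x i)}).restrictScalars K).comap (LinearMap.applyₗ' K (x i)),
    LinearMap.finiteDimensional_iInf_comap_applyₗ' hgen _, fun r => ?_⟩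
  refine ⟨f ∘ₗ LinearMap.mulRight R (r : S), (mem_iInf _).2 fun i => ?_, fun s => rfl⟩
  exact LinearMap.apply_mul_mem_span_singleton (hnormal i).ge f r
end

section
/- Let R be a Noetherian ring, σ an automorphism of R, δ a σ-derivation, and A = R[x; σ, δ] the Ore extension. If I is a σ- and δ-invariant ideal of R whose Rees ring R ⊕ ⊕_{n≥1} Iⁿtⁿ ⊆ R[t] is Noetherian, then the Rees ring of the ideal IA of A is Noetherian; in fact it is isomorphic to the Ore extension (Rees ring of I)[x; σ, δ]. -/
/-- The Rees ring of an ideal `I` of `A`: the subring of the polynomial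
ring `A[t]` generated by `A + I·t`. -/
noncomputable def ReesRing (A : Type*) [Ring A] (I : Ideal A) : Subring (Polynomial A) :=
  Subring.closure (Set.range (Polynomial.C : A →+* Polynomial A) ∪
    {p : Polynomial A | ∃ a ∈ I, p = Polynomial.C a * Polynomial.X})

/-- `A` is an Ore extension `R[x;σ,δ]` of `R` (via the embedding `ι`):
the defining relation `x·r = σ(r)·x + δ(r)` holds and every element of `A`
is uniquely a left `R`-linear combination of the powers of `x`. -/
def IsOreExtension {R A : Type*} [Ring R] [Ring A] (σ : R →+* R) (δ : R →+ R)
    (ι : R →+* A) (x : A) : Prop :=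
  Function.Injective ι ∧ (∀ r : R, x * ι r = ι (σ r) * x + ι (δ r)) ∧
  ∀ a : A, ∃! c : ℕ →₀ R, a = c.sum fun n r => ι r * x ^ n

/-!
Inside `A[t]`, the Rees ring of `IA` is the Ore extension `Rees(I)[x; σ, δ]`, with `σ` and `δ`
acting on the coefficients of powers of `t` and `x` embedded as a constant. The commutation
relation holds coefficient by coefficient in `t`; uniqueness of a representation `∑ pₙ xⁿ`
follows from uniqueness in `A`, applied to each `t`-coefficient; existence holds because the
Ore sums with coefficients in `Rees(I)` form a subring, and the elements `a` of `A` for which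
`a t` is such a sum form a left ideal containing `I`.

In a Noetherian ring `σ(I) ⊆ I` forces `σ(I) = I`, so `σ` is surjective on `Rees(I)`, and the
Hilbert basis theorem for Ore extensions applies: the leading-coefficient ideals `Lₙ` of a left
ideal satisfy `σ(Lₙ) ⊆ Lₙ₊₁`, so the chain `σ⁻ⁿ(Lₙ)` stabilises and generators of bounded
degree suffice.
-/

open Polynomial

section OreSum

variable {S B : Type*} [Ring S] [Ring B]

noncomputable def oreSum (ι : S →+* B) (x : B) : (ℕ →₀ S) →+ B :=
  Finsupp.liftAddHom fun n => (AddMonoidHom.mulRight (x ^ n)).comp ι.toAddMonoidHom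

theorem oreSum_apply (ι : S →+* B) (x : B) (c : ℕ →₀ S) :
    oreSum ι x c = c.sum fun n s => ι s * x ^ n := rfl

@[simp]
theorem oreSum_single (ι : S →+* B) (x : B) (n : ℕ) (s : S) :
    oreSum ι x (Finsupp.single n s) = ι s * x ^ n := by
  simp [oreSum_apply]

theorem oreSum_smul (ι : S →+* B) (x : B) (s : S) (c : ℕ →₀ S) :
    oreSum ι x (s • c) = ι s * oreSum ι x c := by
  induction c using Finsupp.induction_linear with
  | zero => simp
  | add c d hc hd => simp [smul_add, hc, hd, mul_add]
  | single n r =>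
    rw [Finsupp.smul_single, smul_eq_mul, oreSum_single, oreSum_single, map_mul, mul_assoc]

theorem map_oreSum {B' : Type*} [Ring B'] (f : B →+* B') (ι : S →+* B) (x : B) (c : ℕ →₀ S) :
    f (oreSum ι x c) = oreSum (f.comp ι) (f x) c := by
  simp [oreSum_apply, map_finsuppSum]

theorem oreSum_comp {S' : Type*} [Ring S'] (ι : S →+* B) (f : S' →+* S) (x : B) (c : ℕ →₀ S') :
    oreSum (ι.comp f) x c = oreSum ι x (c.mapRange f f.map_zero) := by
  simp [oreSum_apply, Finsupp.sum_mapRange_index]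

theorem isOreExtension_iff {σ : S →+* S} {δ : S →+ S} {ι : S →+* B} {x : B} :
    IsOreExtension σ δ ι x ↔ Function.Injective ι ∧
      (∀ r, x * ι r = ι (σ r) * x + ι (δ r)) ∧ Function.Bijective (oreSum ι x) := by
  simp only [IsOreExtension, Function.bijective_iff_existsUnique, oreSum_apply, eq_comm]

noncomputable def oreShift (σ : S →+* S) (δ : S →+ S) : (ℕ →₀ S) →+ (ℕ →₀ S) :=
  (Finsupp.mapDomain.addMonoidHom Nat.succ).comp (Finsupp.mapRange.addMonoidHom σ.toAddMonoidHom) +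
    Finsupp.mapRange.addMonoidHom δ

variable {σ : S →+* S} {δ : S →+ S}

theorem oreShift_single (n : ℕ) (s : S) :
    oreShift σ δ (Finsupp.single n s) =
      Finsupp.single (n + 1) (σ s) + Finsupp.single n (δ s) := by
  simp [oreShift]

theorem oreShift_apply_succ (c : ℕ →₀ S) (n : ℕ) :
    oreShift σ δ c (n + 1) = σ (c n) + δ (c (n + 1)) := by
  simp [oreShift, Finsupp.mapDomain_apply Nat.succ_injective]

variable {ι : S →+* B} {x : B}

theorem oreSum_oreShift (hx : ∀ s, x * ι s = ι (σ s) * x + ι (δ s)) (c : ℕ →₀ S) :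
    oreSum ι x (oreShift σ δ c) = x * oreSum ι x c := by
  suffices (oreSum ι x).comp (oreShift σ δ) = (AddMonoidHom.mulLeft x).comp (oreSum ι x) from
    DFunLike.congr_fun this c
  refine Finsupp.addHom_ext fun n s => ?_
  simp [oreShift_single, ← mul_assoc, hx, add_mul, pow_succ']

theorem pow_mul_oreSum (hx : ∀ s, x * ι s = ι (σ s) * x + ι (δ s)) (n : ℕ) (c : ℕ →₀ S) :
    x ^ n * oreSum ι x c = oreSum ι x ((oreShift σ δ)^[n] c) := by
  induction n with
  | zero => simp
  | succ n ih => rw [pow_succ', mul_assoc, ih, ← oreSum_oreShift hx, Function.iterate_succ_apply']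

noncomputable def oreSumRange (hx : ∀ s, x * ι s = ι (σ s) * x + ι (δ s)) : Subring B :=
  { (oreSum ι x).range with
    one_mem' := ⟨Finsupp.single 0 1, by simp⟩
    mul_mem' := by
      rintro _ _ ⟨c, rfl⟩ ⟨d, rfl⟩
      induction c using Finsupp.induction_linear with
      | zero => exact ⟨0, by simp⟩
      | add c c' hc hc' => rw [map_add, add_mul]; exact AddSubgroup.add_mem _ hc hc'
      | single n s =>
        refine ⟨s • (oreShift σ δ)^[n] d, ?_⟩
        rw [oreSum_single, mul_assoc, pow_mul_oreSum hx, oreSum_smul] }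

end OreSum

section HilbertBasis

open Finsupp Set

variable {S : Type*} [Ring S]

theorem eventually_surjOn_of_mapsTo [IsNoetherianRing S] {σ : S →+* S}
    (hσ : Function.Surjective σ) {L : ℕ → Ideal S} (hL : ∀ n, MapsTo σ (L n) (L (n + 1))) :
    ∀ᶠ n in Filter.atTop, SurjOn σ (L n) (L (n + 1)) := by
  have hmono : Monotone fun n => (L n).comap (σ ^ n) :=
    monotone_nat_of_le_succ fun n s hs => by
      simpa [Function.iterate_succ_apply'] using hL n (Ideal.mem_comap.mp hs)
  obtain ⟨N, hN⟩ := monotone_stabilizes_iff_noetherian.mpr inferInstance ⟨_, hmono⟩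
  refine Filter.eventually_atTop.mpr ⟨N, fun k hk s hs => ?_⟩
  obtain ⟨u, rfl⟩ := hσ.iterate (k + 1) s
  have hu : u ∈ (L (k + 1)).comap (σ ^ (k + 1)) := by simpa using hs
  have hstable : (L (k + 1)).comap (σ ^ (k + 1)) = (L k).comap (σ ^ k) :=
    (hN (k + 1) (by omega)).symm.trans (hN k hk)
  rw [hstable, Ideal.mem_comap, RingHom.coe_pow] at hu
  exact ⟨_, hu, (Function.iterate_succ_apply' σ k u).symm⟩

variable {σ : S →+* S} {δ : S →+ S}

theorem oreShift_mem_supported_Iic {c : ℕ →₀ S} {n : ℕ} (hc : c ∈ supported S S (Iic n)) :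
    oreShift σ δ c ∈ supported S S (Iic (n + 1)) := by
  rw [mem_supported'] at hc ⊢
  rintro (_ | m) hm
  · simp at hm
  · simp only [mem_Iic, not_le] at hm
    rw [oreShift_apply_succ, hc m (by simp; omega), hc (m + 1) (by simp; omega), map_zero,
      map_zero, add_zero]

theorem sub_mem_supported_Iic {c d : ℕ →₀ S} {n : ℕ} (hc : c ∈ supported S S (Iic (n + 1)))
    (hd : d ∈ supported S S (Iic (n + 1))) (hcd : c (n + 1) = d (n + 1)) :
    c - d ∈ supported S S (Iic n) := by
  rw [mem_supported'] at hc hd ⊢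
  intro m hm
  simp only [mem_Iic, not_le] at hm
  rcases (Nat.succ_le_of_lt hm).eq_or_lt with rfl | hm'
  · simp [hcd]
  · simp [hc m (by simpa using hm'), hd m (by simpa using hm')]

theorem exists_le_of_inf_supported_le [IsNoetherianRing S] (hσ : Function.Surjective σ)
    {P : Submodule S (ℕ →₀ S)} (hP : ∀ c ∈ P, oreShift σ δ c ∈ P) :
    ∃ N, ∀ Q : Submodule S (ℕ →₀ S), (∀ c ∈ Q, oreShift σ δ c ∈ Q) →
      P ⊓ supported S S (Iic N) ≤ Q → P ≤ Q := by
  set F : ℕ → Submodule S (ℕ →₀ S) := fun n => P ⊓ supported S S (Iic n)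
  have hF : ∀ n, ∀ c ∈ F n, oreShift σ δ c ∈ F (n + 1) ∧ oreShift σ δ c (n + 1) = σ (c n) := by
    intro n c ⟨hcP, hc⟩
    refine ⟨⟨hP c hcP, oreShift_mem_supported_Iic hc⟩, ?_⟩
    rw [oreShift_apply_succ, (mem_supported' _ _).mp hc (n + 1) (by simp), map_zero, add_zero]
  -- the left ideals of leading coefficients in degree `n`
  set Lead : ℕ → Ideal S := fun n => (F n).map (lapply n)
  have hLead : ∀ n, MapsTo σ (Lead n) (Lead (n + 1)) := by
    rintro n _ ⟨c, hc, rfl⟩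
    exact ⟨_, (hF n c hc).1, (hF n c hc).2⟩
  obtain ⟨N, hN⟩ := Filter.eventually_atTop.mp (eventually_surjOn_of_mapsTo hσ hLead)
  refine ⟨N, fun Q hQ hNQ => ?_⟩
  have hFQ : ∀ k, N ≤ k → F k ≤ Q := by
    refine Nat.le_induction hNQ fun k hk ih d hd => ?_
    obtain ⟨_, ⟨c, hc, rfl⟩, hcd⟩ := hN k hk ⟨d, hd, rfl⟩
    have hsub : d - oreShift σ δ c ∈ F k :=
      ⟨P.sub_mem hd.1 (hF k c hc).1.1,
        sub_mem_supported_Iic hd.2 (hF k c hc).1.2 (by rw [(hF k c hc).2]; exact hcd.symm)⟩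
    simpa using Q.add_mem (ih hsub) (hQ _ (ih hc))
  intro c hc
  refine hFQ (max N (c.support.sup id)) (le_max_left _ _) ⟨hc, ?_⟩
  rw [SetLike.mem_coe, mem_supported]
  exact fun m hm => le_max_of_le_right (Finset.le_sup (f := id) hm)

variable {B : Type*} [Ring B]

noncomputable def oreSumComap (ι : S →+* B) (x : B) (J : Ideal B) : Submodule S (ℕ →₀ S) where
  carrier := oreSum ι x ⁻¹' J
  add_mem' hc hd := by simpa using J.add_mem hc hd
  zero_mem' := by simp
  smul_mem' s c hc := by simpa [oreSum_smul] using J.mul_mem_left (ι s) hc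

theorem oreShift_mem_oreSumComap {ι : S →+* B} {x : B}
    (hx : ∀ s, x * ι s = ι (σ s) * x + ι (δ s)) {J : Ideal B} {c : ℕ →₀ S}
    (hc : c ∈ oreSumComap ι x J) : oreShift σ δ c ∈ oreSumComap ι x J := by
  simpa [oreSumComap, oreSum_oreShift hx] using J.mul_mem_left x hc

theorem isNoetherianRing_of_surjective_oreSum [IsNoetherianRing S] (hσ : Function.Surjective σ)
    {ι : S →+* B} {x : B} (hx : ∀ s, x * ι s = ι (σ s) * x + ι (δ s))
    (hsurj : Function.Surjective (oreSum ι x)) : IsNoetherianRing B := by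
  classical
  refine isNoetherian_def.mpr fun L => ?_
  obtain ⟨N, hN⟩ := exists_le_of_inf_supported_le hσ fun _ => oreShift_mem_oreSumComap hx (J := L)
  have : IsNoetherian S (supported S S (Iic N)) :=
    isNoetherian_of_linearEquiv (supportedEquivFinsupp (Iic N)).symm
  obtain ⟨G, hG⟩ := isNoetherian_submodule.mp this (oreSumComap ι x L ⊓ _) inf_le_right
  refine ⟨G.image (oreSum ι x), le_antisymm ?_ fun b hb => ?_⟩
  · rw [Finset.coe_image, Submodule.span_le]
    rintro _ ⟨g, hg, rfl⟩
    exact (hG ▸ Submodule.subset_span hg : g ∈ oreSumComap ι x L ⊓ _).1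
  · obtain ⟨c, rfl⟩ := hsurj b
    refine hN (oreSumComap ι x (Ideal.span _)) (fun _ => oreShift_mem_oreSumComap hx)
      (hG ▸ Submodule.span_le.mpr fun g hg => ?_) hb
    exact Ideal.subset_span (Finset.mem_coe.mpr (Finset.mem_image_of_mem _ hg))

end HilbertBasis

namespace Polynomial

variable {R R' : Type*} [Ring R] [Ring R']

noncomputable def mapAddMonoidHom (f : R →+ R') : R[X] →+ R'[X] where
  toFun p := ⟨.ofCoeff (p.toFinsupp.coeff.mapRange f f.map_zero)⟩
  map_zero' := Polynomial.ext fun k => by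
    show f ((0 : R[X]).coeff k) = 0
    simp
  map_add' p q := Polynomial.ext fun k => by
    show f ((p + q).coeff k) = f (p.coeff k) + f (q.coeff k)
    simp

@[simp]
theorem coeff_mapAddMonoidHom (f : R →+ R') (p : R[X]) (k : ℕ) :
    (mapAddMonoidHom f p).coeff k = f (p.coeff k) := rfl

theorem mapAddMonoidHom_C (f : R →+ R') (r : R) : mapAddMonoidHom f (C r) = C (f r) := by
  ext k
  simp [coeff_C, apply_ite f]

theorem mapAddMonoidHom_C_mul_X (f : R →+ R') (r : R) :
    mapAddMonoidHom f (C r * X) = C (f r) * X := by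
  ext k
  rw [coeff_mapAddMonoidHom, coeff_C_mul_X, coeff_C_mul_X, apply_ite f, map_zero]

theorem mapAddMonoidHom_mul {σ : R →+* R} {δ : R →+ R}
    (hδ : ∀ a b, δ (a * b) = σ a * δ b + δ a * b) (p q : R[X]) :
    mapAddMonoidHom δ (p * q) = p.map σ * mapAddMonoidHom δ q + mapAddMonoidHom δ p * q := by
  ext k
  simp only [coeff_mapAddMonoidHom, coeff_mul, map_sum, hδ, coeff_add, coeff_map,
    Finset.sum_add_distrib]

variable {A : Type*} [Ring A]

theorem C_mul_map {σ : R →+* R} {δ : R →+ R} {ι : R →+* A} {x : A}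
    (hx : ∀ r, x * ι r = ι (σ r) * x + ι (δ r)) (p : R[X]) :
    C x * p.map ι = (p.map σ).map ι * C x + (mapAddMonoidHom δ p).map ι := by
  ext k
  simp [coeff_C_mul, coeff_mul_C, hx]

theorem coeff_oreSum_map (ι : R →+* A) (x : A) (c : ℕ →₀ R[X]) (k : ℕ) :
    (oreSum (mapRingHom ι) (C x) c).coeff k =
      oreSum ι x (c.mapRange (coeff · k) (coeff_zero k)) := by
  rw [oreSum_apply, oreSum_apply, Finsupp.sum_mapRange_index (by simp), Finsupp.sum,
    finsetSum_coeff]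
  simp only [coe_mapRingHom, ← C_pow, coeff_mul_C, coeff_map, Finsupp.sum]

theorem injective_oreSum_map {ι : R →+* A} {x : A} (h : Function.Injective (oreSum ι x)) :
    Function.Injective (oreSum (mapRingHom ι) (C x)) := by
  intro c d hcd
  ext n k
  have := h <| (coeff_oreSum_map ι x c k).symm.trans <| (congrArg (coeff · k) hcd).trans
    (coeff_oreSum_map ι x d k)
  simpa using DFunLike.congr_fun this n

end Polynomial

theorem Ideal.symm_apply_mem_of_forall_apply_mem {R : Type*} [Ring R] [IsNoetherianRing R]
    {σ : R ≃+* R} {I : Ideal R} (hσI : ∀ a ∈ I, σ a ∈ I) {a : R} (ha : a ∈ I) : σ.symm a ∈ I := by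
  obtain ⟨-, hsurjOn⟩ := (eventually_surjOn_of_mapsTo (σ : R →+* R).surjective
    (L := fun _ => I) fun _ b hb => hσI b hb).exists
  obtain ⟨b, hb, rfl⟩ := hsurjOn ha
  simpa using hb

namespace ReesRing

variable {R A : Type*} [Ring R] [Ring A]

theorem C_mem (I : Ideal R) (r : R) : C r ∈ ReesRing R I :=
  Subring.subset_closure (Or.inl ⟨r, rfl⟩)

theorem C_mul_X_mem {I : Ideal R} {r : R} (hr : r ∈ I) : C r * X ∈ ReesRing R I :=
  Subring.subset_closure (Or.inr ⟨r, hr, rfl⟩)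

theorem map_mem {I : Ideal R} {I' : Ideal A} {f : R →+* A} (hf : ∀ a ∈ I, f a ∈ I') {p : R[X]}
    (hp : p ∈ ReesRing R I) : p.map f ∈ ReesRing A I' := by
  refine (Subring.closure_le (t := (ReesRing A I').comap (mapRingHom f))).mpr ?_ hp
  rintro _ (⟨r, rfl⟩ | ⟨a, ha, rfl⟩)
  · simpa using C_mem I' (f r)
  · simpa using C_mul_X_mem (hf a ha)

theorem mapAddMonoidHom_mem {σ : R →+* R} {δ : R →+ R}
    (hδ : ∀ a b, δ (a * b) = σ a * δ b + δ a * b) {I : Ideal R} (hσI : ∀ a ∈ I, σ a ∈ I)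
    (hδI : ∀ a ∈ I, δ a ∈ I) {p : R[X]} (hp : p ∈ ReesRing R I) :
    Polynomial.mapAddMonoidHom δ p ∈ ReesRing R I := by
  induction hp using Subring.closure_induction with
  | mem q hq =>
    rcases hq with ⟨r, rfl⟩ | ⟨a, ha, rfl⟩
    · rw [mapAddMonoidHom_C]
      exact C_mem I _
    · rw [mapAddMonoidHom_C_mul_X]
      exact C_mul_X_mem (hδI a ha)
  | zero => simp
  | one =>
    rw [← C_1, mapAddMonoidHom_C]
    exact C_mem I _
  | add p q _ _ hp hq => simpa using add_mem hp hq
  | neg p _ hp => simpa using neg_mem hp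
  | mul p q hp' hq' hp hq =>
    rw [mapAddMonoidHom_mul hδ]
    exact add_mem (mul_mem (map_mem hσI hp') hq) (mul_mem hp hq')

noncomputable def map {I : Ideal R} {I' : Ideal A} (f : R →+* A) (hf : ∀ a ∈ I, f a ∈ I') :
    ReesRing R I →+* ReesRing A I' :=
  ((mapRingHom f).comp (ReesRing R I).subtype).codRestrict _ fun p => map_mem hf p.2

theorem map_injective {I : Ideal R} {I' : Ideal A} {f : R →+* A} (hf : ∀ a ∈ I, f a ∈ I')
    (hinj : Function.Injective f) : Function.Injective (map f hf) :=
  fun _ _ h => Subtype.ext (Polynomial.map_injective f hinj (congrArg Subtype.val h))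

theorem map_surjective [IsNoetherianRing R] {σ : R ≃+* R} {I : Ideal R}
    (hσI : ∀ a ∈ I, σ a ∈ I) : Function.Surjective (map (σ : R →+* R) hσI) := fun p =>
  ⟨map (σ.symm : R →+* R) (fun _ => Ideal.symm_apply_mem_of_forall_apply_mem hσI) p,
    Subtype.ext <| by
      change ((p : R[X]).map _).map _ = _
      rw [Polynomial.map_map]
      simp⟩

noncomputable def mapAddMonoidHom {σ : R →+* R} {δ : R →+ R}
    (hδ : ∀ a b, δ (a * b) = σ a * δ b + δ a * b) {I : Ideal R} (hσI : ∀ a ∈ I, σ a ∈ I)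
    (hδI : ∀ a ∈ I, δ a ∈ I) : ReesRing R I →+ ReesRing R I :=
  ((Polynomial.mapAddMonoidHom δ).comp (ReesRing R I).subtype.toAddMonoidHom).codRestrict _
    fun p => mapAddMonoidHom_mem hδ hσI hδI p.2

theorem exists_oreSum_eq {σ : R →+* R} {δ : R →+ R}
    (hδ : ∀ a b, δ (a * b) = σ a * δ b + δ a * b) {I : Ideal R} (hσI : ∀ a ∈ I, σ a ∈ I)
    (hδI : ∀ a ∈ I, δ a ∈ I) {ι : R →+* A} {x : A} (hx : ∀ r, x * ι r = ι (σ r) * x + ι (δ r))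
    (hsurj : Function.Surjective (oreSum ι x)) {b : A[X]} (hb : b ∈ ReesRing A (I.map ι)) :
    ∃ c : ℕ →₀ ReesRing R I, oreSum ((mapRingHom ι).comp (ReesRing R I).subtype) (C x) c = b := by
  set O := oreSumRange (σ := map σ hσI) (δ := mapAddMonoidHom hδ hσI hδI)
    (ι := (mapRingHom ι).comp (ReesRing R I).subtype) (x := C x) fun p => C_mul_map hx p
  have hC : ∀ a, C a ∈ O := by
    intro a
    obtain ⟨c, rfl⟩ := hsurj a
    refine ⟨c.mapRange ((C : R →+* R[X]).codRestrict _ (C_mem I)) (map_zero _), ?_⟩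
    rw [← oreSum_comp, map_oreSum]
    congr 1
    ext r
    simp
  let J : Ideal A :=
    { carrier := {a | C a * X ∈ O}
      add_mem' ha hb := by simpa [add_mul] using O.add_mem ha hb
      zero_mem' := by simp
      smul_mem' b a ha := by simpa [mul_assoc] using O.mul_mem (hC b) ha }
  have hIJ : I.map ι ≤ J := Ideal.span_le.mpr <| by
    rintro _ ⟨r, hr, rfl⟩
    exact ⟨Finsupp.single 0 ⟨C r * X, C_mul_X_mem hr⟩, by simp⟩
  refine (Subring.closure_le (t := O)).mpr ?_ hb
  rintro _ (⟨a, rfl⟩ | ⟨a, ha, rfl⟩)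
  exacts [hC a, hIJ ha]

theorem coe_oreSum_map {I : Ideal R} {I' : Ideal A} {ι : R →+* A} (hι : ∀ a ∈ I, ι a ∈ I')
    (x : A) (c : ℕ →₀ ReesRing R I) :
    (oreSum (map ι hι) ⟨C x, C_mem I' x⟩ c : A[X]) =
      oreSum ((mapRingHom ι).comp (ReesRing R I).subtype) (C x) c :=
  map_oreSum (ReesRing A I').subtype _ _ c

theorem injective_oreSum_map {I : Ideal R} {I' : Ideal A} {ι : R →+* A}
    (hι : ∀ a ∈ I, ι a ∈ I') {x : A} (hinj : Function.Injective (oreSum ι x)) :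
    Function.Injective (oreSum (map ι hι) ⟨C x, C_mem I' x⟩) := by
  intro c d hcd
  have := congrArg Subtype.val hcd
  rw [coe_oreSum_map, coe_oreSum_map, oreSum_comp, oreSum_comp] at this
  exact Finsupp.mapRange_injective _ rfl Subtype.val_injective
    (Polynomial.injective_oreSum_map hinj this)

end ReesRing

theorem stmt11_general (R A : Type*) [Ring R] [IsNoetherianRing R] [Ring A]
    (σ : R ≃+* R) (δ : R →+ R)
    (hδ : ∀ a b : R, δ (a * b) = σ a * δ b + δ a * b)
    (ι : R →+* A) (x : A) (hOre : IsOreExtension (σ : R →+* R) δ ι x)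
    (I : Ideal R)
    (hσI : ∀ a ∈ I, σ a ∈ I) (hδI : ∀ a ∈ I, δ a ∈ I)
    (hRees : IsNoetherianRing (ReesRing R I)) :
    IsNoetherianRing (ReesRing A (Ideal.map ι I)) ∧
    ∃ (σ' : ReesRing R I →+* ReesRing R I) (δ' : ReesRing R I →+ ReesRing R I)
      (ι' : ReesRing R I →+* ReesRing A (Ideal.map ι I)) (X : ReesRing A (Ideal.map ι I)),
      (∀ (p : ReesRing R I) (k : ℕ),
        ((σ' p : Polynomial R)).coeff k = σ ((p : Polynomial R).coeff k)) ∧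
      (∀ (p : ReesRing R I) (k : ℕ),
        ((δ' p : Polynomial R)).coeff k = δ ((p : Polynomial R).coeff k)) ∧
      (∀ (p : ReesRing R I) (k : ℕ),
        ((ι' p : Polynomial A)).coeff k = ι ((p : Polynomial R).coeff k)) ∧
      (X : Polynomial A) = Polynomial.C x ∧
      (∀ a b : ReesRing R I, δ' (a * b) = σ' a * δ' b + δ' a * b) ∧
      IsOreExtension σ' δ' ι' X := by
  obtain ⟨hι, hx, hinj, hsurj⟩ := isOreExtension_iff.mp hOre
  have hιI : ∀ a ∈ I, ι a ∈ I.map ι := fun a => Ideal.mem_map_of_mem ι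
  set σ' := ReesRing.map (σ : R →+* R) hσI
  set δ' := ReesRing.mapAddMonoidHom (σ := (σ : R →+* R)) hδ hσI hδI
  set ι' := ReesRing.map ι hιI
  set X : ReesRing A (I.map ι) := ⟨C x, ReesRing.C_mem _ x⟩
  have hX : ∀ p, X * ι' p = ι' (σ' p) * X + ι' (δ' p) := fun p => Subtype.ext (C_mul_map hx p)
  have hsurj' : Function.Surjective (oreSum ι' X) := fun b => by
    obtain ⟨c, hc⟩ := ReesRing.exists_oreSum_eq hδ hσI hδI hx hsurj b.2
    exact ⟨c, Subtype.ext ((ReesRing.coe_oreSum_map hιI x c).trans hc)⟩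
  refine ⟨isNoetherianRing_of_surjective_oreSum (ReesRing.map_surjective hσI) hX hsurj',
    σ', δ', ι', X, fun p k => coeff_map _ k, fun p k => rfl, fun p k => coeff_map _ k, rfl,
    fun a b => Subtype.ext (mapAddMonoidHom_mul hδ _ _),
    isOreExtension_iff.mpr ⟨ReesRing.map_injective hιI hι, hX,
      ReesRing.injective_oreSum_map hιI hinj, hsurj'⟩⟩

theorem stmt11 (R A : Type*) [Ring R] [IsNoetherianRing R] [Ring A]
    (σ : R ≃+* R) (δ : R →+ R)
    (hδ : ∀ a b : R, δ (a * b) = σ a * δ b + δ a * b)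
    (ι : R →+* A) (x : A) (hOre : IsOreExtension (σ : R →+* R) δ ι x)
    (I : Ideal R) (hItwoSided : ∀ a ∈ I, ∀ b : R, a * b ∈ I)
    (hσI : ∀ a ∈ I, σ a ∈ I) (hδI : ∀ a ∈ I, δ a ∈ I)
    (hRees : IsNoetherianRing (ReesRing R I)) :
    IsNoetherianRing (ReesRing A (Ideal.map ι I)) ∧
    ∃ (σ' : ReesRing R I →+* ReesRing R I) (δ' : ReesRing R I →+ ReesRing R I)
      (ι' : ReesRing R I →+* ReesRing A (Ideal.map ι I)) (X : ReesRing A (Ideal.map ι I)),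
      (∀ (p : ReesRing R I) (k : ℕ),
        ((σ' p : Polynomial R)).coeff k = σ ((p : Polynomial R).coeff k)) ∧
      (∀ (p : ReesRing R I) (k : ℕ),
        ((δ' p : Polynomial R)).coeff k = δ ((p : Polynomial R).coeff k)) ∧
      (∀ (p : ReesRing R I) (k : ℕ),
        ((ι' p : Polynomial A)).coeff k = ι ((p : Polynomial R).coeff k)) ∧
      (X : Polynomial A) = Polynomial.C x ∧
      (∀ a b : ReesRing R I, δ' (a * b) = σ' a * δ' b + δ' a * b) ∧
      IsOreExtension σ' δ' ι' X :=
  stmt11_general R A σ δ hδ ι x hOre I hσI hδI hRees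
end

section
/- Let A be a ring with an ideal I whose Rees ring A ⊕ ⊕_{n≥1} Iⁿtⁿ is left Noetherian. Then I has the left Artin-Rees property: for every finitely generated left A-module M and submodule N of M there exists n ≥ 1 with N ∩ IⁿM ⊆ IN. -/
/-!
For a two-sided ideal `I`, the Rees ring consists exactly of the polynomials whose `n`-th
coefficient lies in `Iⁿ`. Presenting `M` as a quotient of `F = Aᵏ`, it suffices to treat a
submodule `N ≤ F`. The vectors in `A[t]ᵏ` whose `n`-th coefficient lies in `N ⊓ IⁿF` form a
submodule of the finitely generated module `Rᵏ` over the left noetherian Rees ring `R`, so they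
are generated by finitely many vectors of degree at most `d`. Multiplying by an element of `R`
only moves coefficients up through multiplication by elements of `I`, so every coefficient of
degree `> d` of such a vector lies in `IN`; applied to `x t^(d+1)` with `x ∈ N ⊓ I^(d+1)F` this
gives `x ∈ IN`.
-/

universe v

open Polynomial Finset.HasAntidiagonal

namespace ReesRing

variable {A : Type*} [Ring A] {I : Ideal A}

theorem monomial_mem {n : ℕ} {a : A} (ha : a ∈ I ^ n) : monomial n a ∈ ReesRing A I := by
  induction n generalizing a with
  | zero => exact Subring.subset_closure (Or.inl ⟨a, (monomial_zero_left (a := a)).symm⟩)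
  | succ n ih =>
    rw [Submodule.pow_succ] at ha
    refine Submodule.mul_induction_on ha (fun b hb c hc => ?_) (fun b c hb hc => ?_)
    · rw [← monomial_mul_monomial]
      exact mul_mem (ih hb) (Subring.subset_closure (Or.inr ⟨c, hc, (C_mul_X_eq_monomial).symm⟩))
    · rw [map_add]
      exact add_mem hb hc

theorem coeff_monomial_mem_pow {n : ℕ} {a : A} (ha : a ∈ I ^ n) (m : ℕ) :
    (monomial n a).coeff m ∈ I ^ m := by
  rw [coeff_monomial]
  split_ifs with h
  · exact h ▸ ha
  · exact zero_mem _

theorem coeff_mem_pow [I.IsTwoSided] {p : A[X]} (hp : p ∈ ReesRing A I) (m : ℕ) :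
    p.coeff m ∈ I ^ m := by
  induction hp using Subring.closure_induction generalizing m with
  | mem p hp =>
    obtain ⟨a, rfl⟩ | ⟨a, ha, rfl⟩ := hp
    · rw [← monomial_zero_left]
      exact coeff_monomial_mem_pow (by rw [Submodule.pow_zero, Ideal.one_eq_top]; trivial) m
    · rw [C_mul_X_eq_monomial]
      exact coeff_monomial_mem_pow (by rwa [Submodule.pow_one]) m
  | zero => simp
  | one =>
    rw [← monomial_zero_one]
    exact coeff_monomial_mem_pow (by rw [Submodule.pow_zero, Ideal.one_eq_top]; trivial) m
  | add p q _ _ hp hq => rw [coeff_add]; exact add_mem (hp m) (hq m)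
  | neg p _ hp => rw [coeff_neg]; exact neg_mem (hp m)
  | mul p q _ _ hp hq =>
    rw [coeff_mul]
    refine sum_mem fun x hx => ?_
    rw [← mem_antidiagonal.mp hx, Ideal.IsTwoSided.pow_add]
    exact Ideal.mul_mem_mul (hp x.1) (hq x.2)

theorem mem_iff [I.IsTwoSided] {p : A[X]} : p ∈ ReesRing A I ↔ ∀ n, p.coeff n ∈ I ^ n := by
  refine ⟨coeff_mem_pow, fun hp => ?_⟩
  rw [p.as_sum_support]
  exact sum_mem fun n _ => monomial_mem (hp n)

end ReesRing

theorem Ideal.apply_mem_of_mem_smul_top {A ι : Type*} [Ring A] (J : Ideal A) [J.IsTwoSided]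
    {x : ι → A} (hx : x ∈ J • (⊤ : Submodule A (ι → A))) (i : ι) : x i ∈ J := by
  refine Submodule.smul_induction_on (p := fun x : ι → A => x i ∈ J) hx ?_ fun _ _ => add_mem
  exact fun r hr m _ => J.mul_mem_right (m i) hr

theorem Submodule.inf_smul_top_le_smul_of_surjective {A M M' : Type*} [Ring A]
    [AddCommGroup M] [Module A M] [AddCommGroup M'] [Module A M'] {f : M →ₗ[A] M'}
    (hf : Function.Surjective f) {N : Submodule A M'} {J K : Ideal A}
    (h : N.comap f ⊓ K • ⊤ ≤ J • N.comap f) : N ⊓ K • ⊤ ≤ J • N := by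
  rintro _ ⟨hxN, hx⟩
  rw [← LinearMap.range_eq_top.mpr hf, LinearMap.range_eq_map, ← Submodule.map_smul''] at hx
  obtain ⟨y, hy, rfl⟩ := hx
  have hfy := Submodule.mem_map_of_mem (f := f) (h ⟨hxN, hy⟩)
  rw [Submodule.map_smul''] at hfy
  exact smul_mono_right _ (Submodule.map_comap_le f N) hfy

namespace ArtinRees

open ReesRing

variable {A : Type*} [Ring A] {I : Ideal A} {ι : Type*}

def piCoeff (v : ι → A[X]) (n : ℕ) : ι → A := fun i => (v i).coeff n

@[simp]
theorem piCoeff_apply (v : ι → A[X]) (n : ℕ) (i : ι) : piCoeff v n i = (v i).coeff n := rfl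

@[simp]
theorem piCoeff_zero (n : ℕ) : piCoeff (0 : ι → A[X]) n = 0 := by
  funext; simp

@[simp]
theorem piCoeff_add (v w : ι → A[X]) (n : ℕ) : piCoeff (v + w) n = piCoeff v n + piCoeff w n := by
  funext; simp

theorem piCoeff_smul (p : A[X]) (v : ι → A[X]) (n : ℕ) :
    piCoeff (p • v) n = ∑ x ∈ antidiagonal n, p.coeff x.1 • piCoeff v x.2 := by
  funext i; simp [coeff_mul, Finset.sum_apply]

theorem piCoeff_eq_zero_of_natDegree_lt {v : ι → A[X]} {m : ℕ} (h : ∀ i, (v i).natDegree < m) :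
    piCoeff v m = 0 := by
  funext i; exact coeff_eq_zero_of_natDegree_lt (h i)

theorem smul_mem_inf_pow_smul_top [I.IsTwoSided] {M : Type*} [AddCommGroup M] [Module A M]
    (N : Submodule A M) {a b : ℕ} {c : A} (hc : c ∈ I ^ a) {x : M}
    (hx : x ∈ N ⊓ I ^ b • ⊤) : c • x ∈ N ⊓ I ^ (a + b) • ⊤ := by
  refine ⟨N.smul_mem c hx.1, ?_⟩
  rw [Ideal.IsTwoSided.pow_add, Submodule.mul_smul]
  exact Submodule.smul_mem_smul hc hx.2

variable (I) in
def reesSubmodule [I.IsTwoSided] (N : Submodule A (ι → A)) :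
    Submodule (ReesRing A I) (ι → A[X]) where
  carrier := {v | ∀ n, piCoeff v n ∈ N ⊓ I ^ n • ⊤}
  add_mem' hv hw n := by rw [piCoeff_add]; exact add_mem (hv n) (hw n)
  zero_mem' n := by rw [piCoeff_zero]; exact zero_mem _
  smul_mem' r v hv n := by
    rw [Subring.smul_def, piCoeff_smul]
    refine sum_mem fun x hx => ?_
    rw [← mem_antidiagonal.mp hx]
    exact smul_mem_inf_pow_smul_top N (coeff_mem_pow r.2 x.1) (hv x.2)

variable [I.IsTwoSided] {N : Submodule A (ι → A)}

theorem reesSubmodule_le_span [Fintype ι] [DecidableEq ι] :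
    reesSubmodule I N ≤ Submodule.span (ReesRing A I) (Set.range fun i => Pi.single i 1) := by
  intro v hv
  rw [Submodule.mem_span_range_iff_exists_fun]
  refine ⟨fun i => ⟨v i, mem_iff.2 fun n => I ^ n |>.apply_mem_of_mem_smul_top (hv n).2 i⟩, ?_⟩
  simp [Subring.smul_def, ← Pi.single_smul', Finset.univ_sum_single]

theorem reesSubmodule_fg [Fintype ι] [IsNoetherianRing (ReesRing A I)] :
    (reesSubmodule I N).FG := by
  classical
  exact (Submodule.fg_span (Set.finite_range _)).of_le reesSubmodule_le_span

theorem exists_piCoeff_mem_smul [Fintype ι] (hW : (reesSubmodule I N).FG) :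
    ∃ d, ∀ v ∈ reesSubmodule I N, ∀ m, d < m → piCoeff v m ∈ I • N := by
  obtain ⟨S, hS⟩ := hW
  refine ⟨S.sup fun s => Finset.univ.sup fun i => (s i).natDegree, fun v hv => ?_⟩
  rw [← hS] at hv
  induction hv using Submodule.span_induction with
  | mem s hs =>
    intro m hm
    rw [piCoeff_eq_zero_of_natDegree_lt fun i => lt_of_le_of_lt ?_ hm]
    · exact zero_mem _
    · exact (Finset.le_sup (f := fun i => (s i).natDegree) (Finset.mem_univ i)).trans
        (Finset.le_sup (f := fun s => Finset.univ.sup fun i => (s i).natDegree) hs)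
  | zero => simp
  | add v w _ _ hv hw => intro m hm; rw [piCoeff_add]; exact add_mem (hv m hm) (hw m hm)
  | smul r v hv ih =>
    intro m hm
    rw [Subring.smul_def, piCoeff_smul]
    refine sum_mem fun x hx => ?_
    rw [mem_antidiagonal] at hx
    -- `r.coeff 0 • piCoeff v m` is handled by induction; a positive-degree coefficient of `r`
    -- lies in `I` and acts on a coefficient of `v`, which lies in `N`.
    rcases Nat.eq_zero_or_pos x.1 with h0 | hpos
    · exact Submodule.smul_mem _ _ (ih x.2 (by omega))
    · rw [hS] at hv
      exact Submodule.smul_mem_smul (Ideal.pow_le_self hpos.ne' (coeff_mem_pow r.2 x.1)) (hv x.2).1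

theorem exists_inf_pow_smul_le [Fintype ι] [IsNoetherianRing (ReesRing A I)]
    (N : Submodule A (ι → A)) : ∃ n, 1 ≤ n ∧ N ⊓ I ^ n • ⊤ ≤ I • N := by
  obtain ⟨d, hd⟩ := exists_piCoeff_mem_smul (reesSubmodule_fg (I := I) (N := N))
  refine ⟨d + 1, d.succ_pos, fun x hx => ?_⟩
  have hcoeff : ∀ m, piCoeff (fun i => monomial (d + 1) (x i)) m = if d + 1 = m then x else 0 := by
    intro m; funext i; simp only [piCoeff_apply, coeff_monomial]; split_ifs <;> rfl
  have hmem : (fun i => monomial (d + 1) (x i)) ∈ reesSubmodule I N := fun m => by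
    rw [hcoeff]
    split_ifs with h
    exacts [h ▸ hx, zero_mem _]
  simpa [hcoeff] using hd _ hmem (d + 1) d.lt_succ_self

end ArtinRees

theorem stmt12 (A : Type*) [Ring A] (I : Ideal A)
    (hItwoSided : ∀ a ∈ I, ∀ b : A, a * b ∈ I)
    (hRees : IsNoetherianRing (ReesRing A I)) :
    ∀ (M : Type v) [AddCommGroup M] [Module A M] [Module.Finite A M]
      (N : Submodule A M), ∃ n : ℕ, 1 ≤ n ∧ N ⊓ (I ^ n • (⊤ : Submodule A M)) ≤ I • N := by
  intro M _ _ _ N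
  have : I.IsTwoSided := ⟨fun b ha => hItwoSided _ ha b⟩
  obtain ⟨k, f, hf⟩ := Module.Finite.exists_fin' A M
  obtain ⟨n, hn, hle⟩ := ArtinRees.exists_inf_pow_smul_le (I := I) (N.comap f)
  exact ⟨n, hn, Submodule.inf_smul_top_le_smul_of_surjective hf hle⟩
end

section
/- Let R be a ring, δ a derivation of R, and A = R[y; δ]. Let I be an ideal of R generated by a normalizing sequence (x₁, ..., xₙ) such that δ(xᵢ) ∈ Rx₁ + ... + Rxᵢ for all 1 ≤ i ≤ n. Then the ideal AI of A is polynormal, with (x₁, ..., xₙ) a normalizing sequence of generators of AI in A. -/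
/-- `x₁, …, xₙ` is a normalizing sequence: for each `j`, the image of `x j`
in the quotient by the left ideal `S x₁ + ⋯ + S x_{j-1}` is normal
(it generates the same left and right ideal). -/
def IsNormalizingSeq {S : Type*} [Ring S] {n : ℕ} (x : Fin n → S) : Prop :=
  ∀ j : Fin n,
    (∀ s : S, ∃ s' : S, x j * s - s' * x j ∈ Ideal.span {y : S | ∃ i, i < j ∧ y = x i}) ∧
    (∀ s : S, ∃ s' : S, s * x j - x j * s' ∈ Ideal.span {y : S | ∃ i, i < j ∧ y = x i})

/-!
Modulo the left ideal generated by `x₁, …, x_{j-1}`, which is two-sided by induction on `j`,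
the elements `a` of `A` with `xⱼ a ∈ A xⱼ` (resp. `a xⱼ ∈ xⱼ A`) form a subring. It contains `R`
because the sequence is normalizing in `R`, and it contains `y`: writing
`δ(xⱼ) = c + r xⱼ` with `c ∈ R x₁ + ⋯ + R x_{j-1}`, one has
`xⱼ y = (y - r) xⱼ - c` and `y xⱼ = xⱼ (y + r') + c + (r xⱼ - xⱼ r')` for `r'` with
`r xⱼ - xⱼ r' ∈ R x₁ + ⋯ + R x_{j-1}`. Since `R` and `y` generate `A`, that subring is all of `A`.
-/

open Ideal

namespace Ideal

variable {S : Type*} [Ring S]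

theorem isTwoSided_span {X : Set S} (h : ∀ z ∈ X, ∀ t, z * t ∈ span X) : (span X).IsTwoSided := by
  refine ⟨fun t ha => ?_⟩
  induction ha using Submodule.span_induction with
  | mem z hz => exact h z hz t
  | zero => simp
  | add a b _ _ ha hb => simpa [add_mul] using add_mem ha hb
  | smul r a _ ha => simpa [mul_assoc] using mul_mem_left _ r ha

def prefixSpan {n : ℕ} (v : Fin n → S) (j : Fin n) : Ideal S :=
  span {z | ∃ i, i < j ∧ z = v i}

variable {n : ℕ} (v : Fin n → S)

theorem prefixSpan_mono {i j : Fin n} (hij : i < j) : prefixSpan v i ≤ prefixSpan v j :=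
  span_mono fun _ ⟨k, hk, hz⟩ => ⟨k, hk.trans hij, hz⟩

theorem span_setOf_le_eq_span_singleton_sup_prefixSpan (j : Fin n) :
    span {z | ∃ k, k ≤ j ∧ z = v k} = span {v j} ⊔ prefixSpan v j := by
  rw [prefixSpan, ← span_union]
  congr 1
  ext z
  simp only [Set.singleton_union, Set.mem_insert_iff, le_iff_lt_or_eq]
  constructor
  · rintro ⟨k, hk | rfl, rfl⟩
    exacts [Or.inr ⟨k, hk, rfl⟩, Or.inl rfl]
  · rintro (rfl | ⟨k, hk, rfl⟩)
    exacts [⟨j, Or.inr rfl, rfl⟩, ⟨k, Or.inl hk, rfl⟩]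

theorem isTwoSided_prefixSpan (j : Fin n)
    (h : ∀ i < j, ∀ t, ∃ t', v i * t - t' * v i ∈ prefixSpan v i) :
    (prefixSpan v j).IsTwoSided := by
  refine isTwoSided_span fun _ ⟨i, hij, hz⟩ t => ?_
  subst hz
  obtain ⟨t', ht'⟩ := h i hij t
  have hvi : v i ∈ prefixSpan v j := subset_span ⟨i, hij, rfl⟩
  have hsum := add_mem (prefixSpan_mono v hij ht') (mul_mem_left _ t' hvi)
  rwa [sub_add_cancel] at hsum

theorem map_prefixSpan {T : Type*} [Ring T] (f : S →+* T) (j : Fin n) :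
    (prefixSpan v j).map f = prefixSpan (fun i => f (v i)) j := by
  rw [prefixSpan, prefixSpan, map_span]
  congr 1
  ext z
  simp [eq_comm]

end Ideal

namespace Subring

variable {S : Type*} [Ring S] (J : Ideal S) [J.IsTwoSided] (z : S)

def leftNormalizerMod : Subring S where
  carrier := {s | ∃ s', z * s - s' * z ∈ J}
  one_mem' := ⟨1, by simp⟩
  zero_mem' := ⟨0, by simp⟩
  add_mem' := by
    rintro s t ⟨s', hs⟩ ⟨t', ht⟩
    refine ⟨s' + t', ?_⟩
    convert add_mem hs ht using 1
    noncomm_ring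
  neg_mem' := by
    rintro s ⟨s', hs⟩
    refine ⟨-s', ?_⟩
    convert neg_mem hs using 1
    noncomm_ring
  mul_mem' := by
    rintro s t ⟨s', hs⟩ ⟨t', ht⟩
    refine ⟨s' * t', ?_⟩
    convert add_mem (mul_mem_right t J hs) (mul_mem_left J s' ht) using 1
    noncomm_ring

def rightNormalizerMod : Subring S where
  carrier := {s | ∃ s', s * z - z * s' ∈ J}
  one_mem' := ⟨1, by simp⟩
  zero_mem' := ⟨0, by simp⟩
  add_mem' := by
    rintro s t ⟨s', hs⟩ ⟨t', ht⟩
    refine ⟨s' + t', ?_⟩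
    convert add_mem hs ht using 1
    noncomm_ring
  neg_mem' := by
    rintro s ⟨s', hs⟩
    refine ⟨-s', ?_⟩
    convert neg_mem hs using 1
    noncomm_ring
  mul_mem' := by
    rintro s t ⟨s', hs⟩ ⟨t', ht⟩
    refine ⟨s' * t', ?_⟩
    convert add_mem (mul_mem_left J s ht) (mul_mem_right t' J hs) using 1
    noncomm_ring

end Subring

section DifferentialOperatorRing

variable {R A : Type*} [Ring R] [Ring A] {δ : R →+ R} {ι : R →+* A} {y : A}

theorem Subring.eq_top_of_insert_range_subset
    (hgen : ∀ a : A, ∃ c : ℕ →₀ R, a = c.sum fun n r => ι r * y ^ n)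
    {T : Subring A} (hT : insert y (Set.range ι) ⊆ T) : T = ⊤ := by
  refine eq_top_iff.2 fun a _ => ?_
  obtain ⟨c, rfl⟩ := hgen a
  exact sum_mem fun k _ => mul_mem (hT (Or.inr ⟨_, rfl⟩)) (pow_mem (hT (Or.inl rfl)) k)

variable (hrel : ∀ r : R, y * ι r = ι r * y + ι (δ r))
  (hgen : ∀ a : A, ∃ c : ℕ →₀ R, a = c.sum fun n r => ι r * y ^ n)
include hrel hgen

theorem leftNormalizerMod_eq_top {I : Ideal R} {J : Ideal A} [J.IsTwoSided] (hIJ : I.map ι ≤ J)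
    {z : R} (hδz : δ z ∈ span {z} ⊔ I) (hz : ∀ s, ∃ s', z * s - s' * z ∈ I) :
    Subring.leftNormalizerMod J (ι z) = ⊤ := by
  obtain ⟨r, c, hc, hδ⟩ := mem_span_singleton_sup.1 hδz
  have hιc : ι c ∈ J := hIJ (mem_map_of_mem ι hc)
  refine Subring.eq_top_of_insert_range_subset hgen (Set.insert_subset ⟨y - ι r, ?_⟩ ?_)
  · have hy : ι z * y - (y - ι r) * ι z = -ι c := by
      rw [sub_mul, hrel, ← hδ, map_add, map_mul]
      noncomm_ring
    rw [hy]
    exact neg_mem hιc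
  · rintro _ ⟨s, rfl⟩
    obtain ⟨s', hs'⟩ := hz s
    exact ⟨ι s', by simpa using hIJ (mem_map_of_mem ι hs')⟩

theorem rightNormalizerMod_eq_top {I : Ideal R} {J : Ideal A} [J.IsTwoSided] (hIJ : I.map ι ≤ J)
    {z : R} (hδz : δ z ∈ span {z} ⊔ I) (hz : ∀ s, ∃ s', s * z - z * s' ∈ I) :
    Subring.rightNormalizerMod J (ι z) = ⊤ := by
  obtain ⟨r, c, hc, hδ⟩ := mem_span_singleton_sup.1 hδz
  have hιc : ι c ∈ J := hIJ (mem_map_of_mem ι hc)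
  refine Subring.eq_top_of_insert_range_subset hgen (Set.insert_subset ?_ ?_)
  · obtain ⟨r', hr'⟩ := hz r
    refine ⟨y + ι r', ?_⟩
    have hy : y * ι z - ι z * (y + ι r') = ι c + ι (r * z - z * r') := by
      rw [hrel, ← hδ, map_add, map_mul, map_sub, map_mul, map_mul]
      noncomm_ring
    rw [hy]
    exact add_mem hιc (hIJ (mem_map_of_mem ι hr'))
  · rintro _ ⟨s, rfl⟩
    obtain ⟨s', hs'⟩ := hz s
    exact ⟨ι s', by simpa using hIJ (mem_map_of_mem ι hs')⟩

theorem IsNormalizingSeq.map_of_derivation_mem {n : ℕ} {x : Fin n → R} (hx : IsNormalizingSeq x)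
    (hδx : ∀ i : Fin n, δ (x i) ∈ span {z : R | ∃ k, k ≤ i ∧ z = x k}) :
    IsNormalizingSeq fun i => ι (x i) := by
  have hδx' : ∀ j, δ (x j) ∈ span {x j} ⊔ prefixSpan x j := fun j =>
    span_setOf_le_eq_span_singleton_sup_prefixSpan x j ▸ hδx j
  have hIJ : ∀ j, (prefixSpan x j).map ι ≤ prefixSpan (fun i => ι (x i)) j := fun j =>
    (map_prefixSpan x ι j).le
  have left : ∀ j, ∀ a, ∃ a', ι (x j) * a - a' * ι (x j) ∈ prefixSpan (fun i => ι (x i)) j := by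
    intro j
    induction j using WellFoundedLT.induction with
    | ind j ih =>
      have := isTwoSided_prefixSpan _ j ih
      exact fun a => (leftNormalizerMod_eq_top hrel hgen (hIJ j) (hδx' j) (hx j).1).ge
        (Subring.mem_top a)
  intro j
  have := isTwoSided_prefixSpan _ j fun i _ => left i
  exact ⟨left j, fun a =>
    (rightNormalizerMod_eq_top hrel hgen (hIJ j) (hδx' j) (hx j).2).ge (Subring.mem_top a)⟩

end DifferentialOperatorRing

theorem stmt13_general (R A : Type*) [Ring R] [Ring A] (δ : R →+ R)
    (ι : R →+* A) (y : A) (hOre : IsOreExtension (RingHom.id R) δ ι y)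
    {n : ℕ} (x : Fin n → R) (hx : IsNormalizingSeq x)
    (hδx : ∀ i : Fin n, δ (x i) ∈ Ideal.span {z : R | ∃ k, k ≤ i ∧ z = x k}) :
    IsNormalizingSeq (fun i => ι (x i)) ∧
      Ideal.map ι (Ideal.span (Set.range x)) =
        Ideal.span (Set.range fun i => ι (x i)) := by
  obtain ⟨-, hrel, hgen⟩ := hOre
  refine ⟨hx.map_of_derivation_mem hrel (fun a => (hgen a).exists) hδx, ?_⟩
  rw [Ideal.map_span, ← Set.range_comp]
  rfl

theorem stmt13 (R A : Type*) [Ring R] [Ring A] (δ : R →+ R)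
    (hδ : ∀ a b : R, δ (a * b) = a * δ b + δ a * b)
    (ι : R →+* A) (y : A) (hOre : IsOreExtension (RingHom.id R) δ ι y)
    {n : ℕ} (x : Fin n → R) (hx : IsNormalizingSeq x)
    (hδx : ∀ i : Fin n, δ (x i) ∈ Ideal.span {z : R | ∃ k, k ≤ i ∧ z = x k}) :
    IsNormalizingSeq (fun i => ι (x i)) ∧
      Ideal.map ι (Ideal.span (Set.range x)) =
        Ideal.span (Set.range fun i => ι (x i)) :=
  stmt13_general R A δ ι y hOre x hx hδx
end
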